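/- arXiv:1707.06550 — 3 statements merged into one kernel-verified Lean document; each statement's English description precedes it below -/
import Mathlib

section
/- Let X be a topological space, M a metric space, and L ⊆ C(X,M) a family of continuous functions such that the closure of L in M^X (with the product topology) is compact. If there is a nonempty subset Δ of X that separates L (i.e., for every A ⊆ L there exist closed sets D₁, D₂ ⊆ M with dist(D₁, D₂) > 0 and a point x_A ∈ Δ such that χ(x_A) ∈ D₁ for all χ ∈ A and χ(x_A) ∈ D₂ for all χ ∈ L \ A), then any two disjoint subsets of L have disjoint closures in M^X. -/
open Set

theorem disjoint_closure_of_mapsTo {α β : Type*} [TopologicalSpace α] [TopologicalSpace β]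
    {f : α → β} (hf : Continuous f) {s t : Set α} {u v : Set β} (hu : IsClosed u)
    (hv : IsClosed v) (huv : Disjoint u v) (hs : MapsTo f s u) (ht : MapsTo f t v) :
    Disjoint (closure s) (closure t) :=
  (huv.preimage f).mono (closure_minimal hs (hu.preimage hf))
    (closure_minimal ht (hv.preimage hf))

theorem disjoint_of_forall_le_dist {M : Type*} [PseudoMetricSpace M] {u v : Set M} {ε : ℝ}
    (hε : 0 < ε) (h : ∀ a ∈ u, ∀ b ∈ v, ε ≤ dist a b) : Disjoint u v :=
  disjoint_left.mpr fun a ha hb => by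
    have := h a ha a hb
    rw [dist_self] at this
    linarith

theorem stmt4_general {X M : Type*} [TopologicalSpace X] [MetricSpace M]
    (L : Set (X → M))
    (Δ : Set X)
    (hsep : ∀ A ⊆ L, ∃ (D₁ D₂ : Set M) (x : X), x ∈ Δ ∧
      IsClosed D₁ ∧ IsClosed D₂ ∧ (∃ ε > (0 : ℝ), ∀ a ∈ D₁, ∀ b ∈ D₂, ε ≤ dist a b) ∧
      (∀ χ ∈ A, χ x ∈ D₁) ∧ (∀ χ ∈ L \ A, χ x ∈ D₂)) :
    ∀ A ⊆ L, ∀ B ⊆ L, Disjoint A B → Disjoint (closure A) (closure B) := by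
  intro A hA B hB hAB
  obtain ⟨D₁, D₂, x, -, hD₁, hD₂, ⟨ε, hε, hdist⟩, hA₁, hL₂⟩ := hsep A hA
  have hB₂ : MapsTo (fun f : X → M => f x) B D₂ := fun χ hχ =>
    hL₂ χ ⟨hB hχ, hAB.notMem_of_mem_right hχ⟩
  exact disjoint_closure_of_mapsTo (continuous_apply x) hD₁ hD₂
    (disjoint_of_forall_le_dist hε hdist) hA₁ hB₂

/-- If `L ⊆ C(X,M)` has compact closure in `M^X` (pointwise topology) and some nonempty
`Δ ⊆ X` separates `L`, then any two disjoint subsets of `L` have disjoint closures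
in `M^X`. -/
theorem stmt4 {X M : Type*} [TopologicalSpace X] [MetricSpace M]
    (L : Set (X → M)) (hLcont : ∀ f ∈ L, Continuous f)
    (hLcomp : IsCompact (closure L))
    (Δ : Set X) (hΔ : Δ.Nonempty)
    (hsep : ∀ A ⊆ L, ∃ (D₁ D₂ : Set M) (x : X), x ∈ Δ ∧
      IsClosed D₁ ∧ IsClosed D₂ ∧ (∃ ε > (0 : ℝ), ∀ a ∈ D₁, ∀ b ∈ D₂, ε ≤ dist a b) ∧
      (∀ χ ∈ A, χ x ∈ D₁) ∧ (∀ χ ∈ L \ A, χ x ∈ D₂)) :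
    ∀ A ⊆ L, ∀ B ⊆ L, Disjoint A B → Disjoint (closure A) (closure B) :=
  stmt4_general L Δ hsep
end

section
/- Let X be a topological space, M a metric space, and L a subset of M^X whose closure in M^X is compact. If any two disjoint subsets of L have disjoint closures in M^X, then the closure of L in M^X is canonically homeomorphic to the Stone–Čech compactification βL of L equipped with the discrete topology (that is, the inclusion L → closure(L) extends to a homeomorphism βL → closure(L)). -/
/-!
Let `f : ι → Y` be a continuous map into a compact Hausdorff space. Its extension
`βι → Y` is surjective as soon as `f` has dense range, since its image is compact and contains
`range f`. It is injective as soon as disjoint subsets of `ι` have images with disjoint closures: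
two points of `βι` with disjoint neighbourhoods `U`, `V` lie in the closures of the traces of
`U` and `V` on `ι`, which are disjoint, and the extension maps these closures into the closures
of their images. A continuous bijection from a compact space to a Hausdorff space is a
homeomorphism. For `L ⊆ M^X` this applies to the inclusion `L → closure L`.
-/

open Set Topology

section StoneCech

variable {α β : Type*} [TopologicalSpace α]

theorem mem_closure_image_stoneCechUnit_preimage {U : Set (StoneCech α)} (hU : IsOpen U)
    {x : StoneCech α} (hx : x ∈ U) :
    x ∈ closure (stoneCechUnit '' (stoneCechUnit ⁻¹' U)) := by
  rw [image_preimage_eq_inter_range]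
  exact denseRange_stoneCechUnit.open_subset_closure_inter hU hx

variable [TopologicalSpace β] [T2Space β] [CompactSpace β] {f : α → β} (hf : Continuous f)
include hf

theorem mapsTo_stoneCechExtend_closure_image (A : Set α) :
    MapsTo (stoneCechExtend hf) (closure (stoneCechUnit '' A)) (closure (f '' A)) := by
  intro x hx
  have := image_closure_subset_closure_image (continuous_stoneCechExtend hf) ⟨x, hx, rfl⟩
  rwa [image_image, image_congr fun a _ => stoneCechExtend_stoneCechUnit hf a] at this

theorem injective_stoneCechExtend_of_disjoint_closure_image
    (hsep : ∀ A B : Set α, Disjoint A B → Disjoint (closure (f '' A)) (closure (f '' B))) :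
    Function.Injective (stoneCechExtend hf) := by
  intro x y hxy
  by_contra hne
  obtain ⟨U, V, hU, hV, hxU, hyV, hUV⟩ := t2_separation hne
  have hx := mapsTo_stoneCechExtend_closure_image hf _
    (mem_closure_image_stoneCechUnit_preimage hU hxU)
  have hy := mapsTo_stoneCechExtend_closure_image hf _
    (mem_closure_image_stoneCechUnit_preimage hV hyV)
  rw [hxy] at hx
  exact disjoint_left.mp (hsep _ _ (hUV.preimage _)) hx hy

theorem surjective_stoneCechExtend_of_denseRange (hdense : DenseRange f) :
    Function.Surjective (stoneCechExtend hf) := by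
  have hrange : range f ⊆ range (stoneCechExtend hf) := by
    rintro _ ⟨a, rfl⟩
    exact ⟨stoneCechUnit a, stoneCechExtend_stoneCechUnit hf a⟩
  intro y
  have := closure_mono hrange (hdense y)
  rwa [(isCompact_range (continuous_stoneCechExtend hf)).isClosed.closure_eq] at this

theorem exists_homeomorph_stoneCech_of_disjoint_closure_image (hdense : DenseRange f)
    (hsep : ∀ A B : Set α, Disjoint A B → Disjoint (closure (f '' A)) (closure (f '' B))) :
    ∃ h : StoneCech α ≃ₜ β, ∀ a, h (stoneCechUnit a) = f a :=
  ⟨(continuous_stoneCechExtend hf).homeoOfEquivCompactToT2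
      (f := .ofBijective _ ⟨injective_stoneCechExtend_of_disjoint_closure_image hf hsep,
        surjective_stoneCechExtend_of_denseRange hf hdense⟩),
    stoneCechExtend_stoneCechUnit hf⟩

end StoneCech

theorem disjoint_closure_of_disjoint_closure_image_val {Z : Type*} [TopologicalSpace Z]
    {S : Set Z} {s t : Set S}
    (h : Disjoint (closure (Subtype.val '' s)) (closure (Subtype.val '' t))) :
    Disjoint (closure s) (closure t) := by
  rw [IsEmbedding.subtypeVal.closure_eq_preimage_closure_image,
    IsEmbedding.subtypeVal.closure_eq_preimage_closure_image]
  exact h.preimage _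

/-- If `L ⊆ M^X` has compact closure in `M^X` and any two disjoint subsets of `L` have
disjoint closures in `M^X`, then the closure of `L` is canonically homeomorphic to the
Stone–Čech compactification of `L` equipped with the discrete topology: the inclusion
`L → closure L` extends to a homeomorphism `βL ≃ closure L`. -/
theorem stmt5 {X M : Type*} [TopologicalSpace X] [MetricSpace M]
    (L : Set (X → M)) (hLcomp : IsCompact (closure L))
    (hdisj : ∀ A ⊆ L, ∀ B ⊆ L, Disjoint A B → Disjoint (closure A) (closure B))
    (ι : Type*) [TopologicalSpace ι] [DiscreteTopology ι] (e : ι ≃ L) :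
    ∃ h : StoneCech ι ≃ₜ closure L,
      ∀ i : ι, h (stoneCechUnit i) = ⟨(e i : X → M), subset_closure (e i).2⟩ := by
  have : CompactSpace (closure L) := isCompact_iff_compactSpace.mp hLcomp
  let f : ι → closure L := inclusion subset_closure ∘ e
  have hdense : DenseRange f :=
    ((denseRange_inclusion_iff _).mpr subset_rfl).comp e.surjective.denseRange
      (continuous_inclusion _)
  have hinj : Function.Injective fun i => (e i : X → M) := Subtype.val_injective.comp e.injective
  have himage (A : Set ι) : (fun i => (e i : X → M)) '' A ⊆ L := by
    rintro _ ⟨i, -, rfl⟩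
    exact (e i).2
  refine exists_homeomorph_stoneCech_of_disjoint_closure_image continuous_of_discreteTopology
    hdense fun A B hAB => disjoint_closure_of_disjoint_closure_image_val ?_
  rw [image_image, image_image]
  exact hdisj _ (himage A) _ (himage B) ((disjoint_image_iff hinj).mpr hAB)
end

section
/- Let G be a maximally almost periodic abelian topological group with Bohr compactification bG (so G embeds as a dense subgroup of bG). Let A ⊆ G and let N ⊆ bG be a subset containing the neutral element such that A + N is compact in bG. Then for every subset F ⊆ A there exists A₀ ⊆ A with |A₀| ≤ |N| such that cl_{bG}(F) ⊆ A₀ + N + cl_{G⁺}(F − F), where G⁺ denotes G with the topology induced from bG and cl_{G⁺} denotes closure in that topology. -/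
open Pointwise

universe u v

theorem closure_sub_closure_subset {M : Type*} [TopologicalSpace M] [Sub M] [ContinuousSub M]
    (s t : Set M) : closure s - closure t ⊆ closure (s - t) :=
  Set.sub_subset_iff.2 fun _ hx _ hy ↦
    map_mem_closure₂ continuous_sub hx hy fun _ ha _ hb ↦ Set.sub_mem_sub ha hb

/-- Every `x = b a + n ∈ S` is rewritten as `(b a₀ + n) + (x - (b a₀ + n))`, where `a₀` is one
fixed choice for `n`, and `x - (b a₀ + n) = b (a - a₀)`. -/
theorem AddMonoidHom.exists_subset_image_add_add_range_inter_sub {G : Type u} {H : Type v}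
    [AddCommGroup G] [AddCommGroup H] (b : G →+ H) {A : Set G} {N S : Set H}
    (hS : S ⊆ b '' A + N) :
    ∃ A₀ ⊆ A, Cardinal.lift.{v} (Cardinal.mk A₀) ≤ Cardinal.lift.{u} (Cardinal.mk N) ∧
      S ⊆ b '' A₀ + N + (Set.range b ∩ (S - S)) := by
  set N' : Set H := {n ∈ N | ∃ a ∈ A, b a + n ∈ S}
  have hN' : ∀ n ∈ N', ∃ a ∈ A, b a + n ∈ S := fun _ hn ↦ hn.2
  choose! pick hpickA hpickS using hN'
  refine ⟨pick '' N', Set.image_subset_iff.2 hpickA, ?_, ?_⟩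
  · exact Cardinal.mk_image_le_lift.trans
      (Cardinal.lift_le.2 (Cardinal.mk_le_mk_of_subset fun _ hn ↦ hn.1))
  · intro x hx
    obtain ⟨_, ⟨a, ha, rfl⟩, n, hn, rfl⟩ := hS hx
    beta_reduce at hx ⊢
    have hnN' : n ∈ N' := ⟨hn, a, ha, hx⟩
    have hdecomp : b (pick n) + n + b (a - pick n) = b a + n := by
      rw [map_sub]; abel
    rw [← hdecomp]
    refine Set.add_mem_add (Set.add_mem_add (Set.mem_image_of_mem b ⟨n, hnN', rfl⟩) hn)
      ⟨Set.mem_range_self _, ?_⟩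
    rw [map_sub, ← add_sub_add_right_eq_sub (b a) (b (pick n)) n]
    exact Set.sub_mem_sub hx (hpickS n hnN')

theorem stmt16_general {G : Type u} {bG : Type v} [AddCommGroup G]
    [TopologicalSpace bG] [AddCommGroup bG] [IsTopologicalAddGroup bG]
    [T2Space bG]
    (b : G →+ bG)
    (A : Set G) (N : Set bG) (hN0 : (0 : bG) ∈ N)
    (hcomp : IsCompact (⇑b '' A + N)) :
    ∀ F ⊆ A, ∃ A₀ ⊆ A, Cardinal.lift.{v} (Cardinal.mk A₀) ≤ Cardinal.lift.{u} (Cardinal.mk N) ∧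
      closure (⇑b '' F) ⊆
        ⇑b '' A₀ + N + (Set.range ⇑b ∩ closure (⇑b '' (F - F))) := by
  intro F hFA
  have hFAN : b '' F ⊆ b '' A + N :=
    (Set.image_mono hFA).trans (Set.subset_add_left _ hN0)
  obtain ⟨A₀, hA₀A, hcard, hcover⟩ := b.exists_subset_image_add_add_range_inter_sub
    (closure_minimal hFAN hcomp.isClosed)
  refine ⟨A₀, hA₀A, hcard, hcover.trans (Set.add_subset_add_left ?_)⟩
  rw [Set.image_sub]
  exact Set.inter_subset_inter_right _ (closure_sub_closure_subset _ _)

/-- Let `G` be a maximally almost periodic abelian topological group, embedded via a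
continuous injective homomorphism `b` with dense image in its Bohr compactification
`bG` (a compact Hausdorff abelian group).  Let `A ⊆ G` and let `N ⊆ bG` contain `0`
with `A + N` compact in `bG`.  Then for every `F ⊆ A` there is `A₀ ⊆ A` with
`|A₀| ≤ |N|` and `cl_{bG}(F) ⊆ A₀ + N + cl_{G⁺}(F - F)`, where the closure of `F - F`
in the Bohr topology `G⁺` is viewed inside `bG` as `range b ∩ cl_{bG}(b(F - F))`. -/
theorem stmt16 {G : Type u} {bG : Type v} [TopologicalSpace G] [AddCommGroup G] [IsTopologicalAddGroup G]
    [TopologicalSpace bG] [AddCommGroup bG] [IsTopologicalAddGroup bG]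
    [CompactSpace bG] [T2Space bG]
    (b : G →+ bG) (hbc : Continuous b) (hbinj : Function.Injective b)
    (hbd : DenseRange b)
    (A : Set G) (N : Set bG) (hN0 : (0 : bG) ∈ N)
    (hcomp : IsCompact (⇑b '' A + N)) :
    ∀ F ⊆ A, ∃ A₀ ⊆ A, Cardinal.lift.{v} (Cardinal.mk A₀) ≤ Cardinal.lift.{u} (Cardinal.mk N) ∧
      closure (⇑b '' F) ⊆
        ⇑b '' A₀ + N + (Set.range ⇑b ∩ closure (⇑b '' (F - F))) :=
  stmt16_general b A N hN0 hcomp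
end
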